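/- arXiv:1612.05702 — 3 statements merged into one kernel-verified Lean document; each statement's English description precedes it below -/
import Mathlib

section
/- Let m be a positive integer and M a positive real. Define the 2m×2m symmetric real matrix L in 2×2 block form with diagonal blocks L11 = Diag(4(M+m), 4(M+m−1), …, 4(M+1)) and L22 = Diag(4m, 4(m−1), …, 4), and off-diagonal blocks L12 = L21 = Diag(M+2m, M+2m−2, …, M+2). If M ≤ 12 (more precisely, if M < 1/(−1/2+1/√3)), then L is positive definite. -/
/-!
Pairing coordinate `j` of the first half with coordinate `j` of the second, `L` splits into the
`2 × 2` blocks `[[4(M+k), M+2k], [M+2k, 4k]]` with `k = m - j ≥ 1`. Each is positive definite iff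
`(M+2k)² < 16k(M+k)`, i.e. `M² - 12kM - 12k² < 0`, i.e. `M` lies strictly between the roots
`(6 ± 4√3)k`; and `1/(-1/2 + 1/√3) = 6 + 4√3`.
-/

open Matrix

lemma one_div_neg_half_add_inv_sqrt_three :
    1 / (-(1 / 2) + 1 / Real.sqrt 3) = 6 + 4 * Real.sqrt 3 := by
  have hs : Real.sqrt 3 ^ 2 = 3 := Real.sq_sqrt (by norm_num)
  have h2 : -Real.sqrt 3 + 2 ≠ 0 := by intro h; nlinarith
  field_simp
  linear_combination 4 * hs

lemma sq_add_two_mul_lt_mul {M k : ℝ} (hM : 0 ≤ M) (hMk : M < (6 + 4 * Real.sqrt 3) * k) :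
    (M + 2 * k) ^ 2 < 4 * (M + k) * (4 * k) := by
  have hs : Real.sqrt 3 ^ 2 = 3 := Real.sq_sqrt (by norm_num)
  have hk : 0 < k := by
    by_contra! h
    nlinarith [Real.sqrt_nonneg 3]
  have hfactor : (M + 2 * k) ^ 2 - 4 * (M + k) * (4 * k)
      = (M - (6 + 4 * Real.sqrt 3) * k) * (M - (6 - 4 * Real.sqrt 3) * k) := by
    linear_combination 16 * k ^ 2 * hs
  have hlow : 0 < M - (6 - 4 * Real.sqrt 3) * k := by nlinarith [Real.sqrt_nonneg 3]
  nlinarith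

lemma quadratic_form_pos {a b d u v : ℝ} (ha : 0 < a) (hdisc : b ^ 2 < a * d)
    (huv : u ≠ 0 ∨ v ≠ 0) : 0 < a * u ^ 2 + 2 * b * u * v + d * v ^ 2 := by
  have hd : 0 < d := by nlinarith [sq_nonneg b]
  rcases huv with hu | hv
  · nlinarith [sq_nonneg (b * u + d * v), mul_pos (sub_pos.2 hdisc) (sq_pos_of_ne_zero hu)]
  · nlinarith [sq_nonneg (a * u + b * v), mul_pos (sub_pos.2 hdisc) (sq_pos_of_ne_zero hv)]

lemma posDef_fromBlocks_diagonal {n : Type*} [Fintype n] [DecidableEq n] {a b d : n → ℝ}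
    (ha : ∀ i, 0 < a i) (hdisc : ∀ i, b i ^ 2 < a i * d i) :
    (fromBlocks (diagonal a) (diagonal b) (diagonal b) (diagonal d)).PosDef := by
  rw [posDef_iff_dotProduct_mulVec]
  refine ⟨by rw [IsHermitian, fromBlocks_conjTranspose]; simp, fun x hx => ?_⟩
  rw [dotProduct, Fintype.sum_sum_type, ← Finset.sum_add_distrib]
  simp only [fromBlocks_mulVec, mulVec_diagonal, Sum.elim_inl, Sum.elim_inr, Pi.add_apply,
    star_trivial, Pi.star_apply]
  have hterm : ∀ i, x (.inl i) ≠ 0 ∨ x (.inr i) ≠ 0 →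
      0 < x (.inl i) * (a i * x (.inl i) + b i * x (.inr i))
        + x (.inr i) * (b i * x (.inl i) + d i * x (.inr i)) := fun i hi => by
    linear_combination quadratic_form_pos (ha i) (hdisc i) hi
  refine Finset.sum_pos' (fun i _ => ?_) ?_
  · by_cases hi : x (.inl i) = 0 ∧ x (.inr i) = 0
    · simp [hi.1, hi.2]
    · exact (hterm i (not_and_or.1 hi)).le
  · obtain ⟨i | i, hi⟩ := Function.ne_iff.1 hx
    · exact ⟨i, Finset.mem_univ i, hterm i (.inl hi)⟩
    · exact ⟨i, Finset.mem_univ i, hterm i (.inr hi)⟩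

theorem stmt_2_general (m : ℕ) (M : ℝ) (hM : 0 < M)
    (hM12 : M < 1 / (-(1 / 2) + 1 / Real.sqrt 3)) :
    (Matrix.fromBlocks
      (Matrix.diagonal fun j : Fin m => 4 * (M + (m : ℝ) - (j : ℕ)))
      (Matrix.diagonal fun j : Fin m => M + 2 * ((m : ℝ) - (j : ℕ)))
      (Matrix.diagonal fun j : Fin m => M + 2 * ((m : ℝ) - (j : ℕ)))
      (Matrix.diagonal fun j : Fin m => 4 * ((m : ℝ) - (j : ℕ)))).PosDef := by
  rw [one_div_neg_half_add_inv_sqrt_three] at hM12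
  have hk : ∀ j : Fin m, 1 ≤ (m : ℝ) - (j : ℕ) := fun j => by
    have : ((j : ℕ) : ℝ) + 1 ≤ m := by exact_mod_cast j.isLt
    linarith
  refine posDef_fromBlocks_diagonal (fun j => by linarith [hk j]) (fun j => ?_)
  have hMk : M < (6 + 4 * Real.sqrt 3) * ((m : ℝ) - (j : ℕ)) := by
    nlinarith [hk j, Real.sqrt_nonneg 3]
  convert sq_add_two_mul_lt_mul hM.le hMk using 2
  ring

/-- The `2m×2m` block matrix `L` with diagonal blocks
`Diag(4(M+m−j))_{j=0..m−1}`, `Diag(4(m−j))_{j=0..m−1}` and off-diagonal blocks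
`Diag(M+2(m−j))_{j=0..m−1}` is positive definite when `M < 1/(−1/2 + 1/√3)`. -/
theorem stmt_2 (m : ℕ) (hm : 0 < m) (M : ℝ) (hM : 0 < M)
    (hM12 : M < 1 / (-(1 / 2) + 1 / Real.sqrt 3)) :
    (Matrix.fromBlocks
      (Matrix.diagonal fun j : Fin m => 4 * (M + (m : ℝ) - (j : ℕ)))
      (Matrix.diagonal fun j : Fin m => M + 2 * ((m : ℝ) - (j : ℕ)))
      (Matrix.diagonal fun j : Fin m => M + 2 * ((m : ℝ) - (j : ℕ)))
      (Matrix.diagonal fun j : Fin m => 4 * ((m : ℝ) - (j : ℕ)))).PosDef :=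
  stmt_2_general m M hM hM12
end

section
/- With A_{11} = Σ_{n∈Z_1} 2/(3C_1 n) + Σ_{n∈Z_2} 1/(2C_1 n), A_{12} = Σ_{n∈Z_1} 1/(3C_1(n−M)), A_{21} = Σ_{n∈Z_1} 1/(3C_1 n), A_{22} = Σ_{n∈Z_1} 2/(3C_1(n−M)) + Σ_{n∈Z_3} 1/(2C_1(n−M)), where all n ∈ Z_1 ∪ Z_2 satisfy n > M > 0, C_1 > 0, and Z_1 is nonempty, one has A_{11}A_{22} − A_{21}A_{12} > 0. -/
/-- With the coefficients `A₁₁, A₁₂, A₂₁, A₂₂` of the 2×2 system for the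
multipliers, and `Z₁` nonempty, one has `A₁₁A₂₂ − A₂₁A₁₂ > 0`. -/
theorem stmt_7 (Z1 Z2 Z3 : Finset ℕ) (hZ1ne : Z1.Nonempty)
    (h12 : Disjoint Z1 Z2) (h13 : Disjoint Z1 Z3) (h23 : Disjoint Z2 Z3)
    (M C1 : ℝ) (hM : 0 < M) (hC1 : 0 < C1)
    (hZ1 : ∀ n ∈ Z1, M < n) (hZ2 : ∀ n ∈ Z2, M < n) (hZ3 : ∀ n ∈ Z3, M < n) :
    (∑ n ∈ Z1, 2 / (3 * C1 * n) + ∑ n ∈ Z2, 1 / (2 * C1 * n)) *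
        (∑ n ∈ Z1, 2 / (3 * C1 * ((n : ℝ) - M)) +
          ∑ n ∈ Z3, 1 / (2 * C1 * ((n : ℝ) - M))) -
      (∑ n ∈ Z1, 1 / (3 * C1 * n)) *
        (∑ n ∈ Z1, 1 / (3 * C1 * ((n : ℝ) - M))) > 0 := by
  have hS1 : (0:ℝ) < ∑ n ∈ Z1, 1 / (3 * C1 * n) := by
    apply Finset.sum_pos _ hZ1ne
    intro n hn
    have : (0:ℝ) < n := lt_trans hM (hZ1 n hn)
    positivity
  have hT1 : (0:ℝ) < ∑ n ∈ Z1, 1 / (3 * C1 * ((n:ℝ) - M)) := by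
    apply Finset.sum_pos _ hZ1ne
    intro n hn
    have : (0:ℝ) < (n:ℝ) - M := sub_pos.mpr (hZ1 n hn)
    positivity
  have hS2 : (0:ℝ) ≤ ∑ n ∈ Z2, 1 / (2 * C1 * n) := by
    apply Finset.sum_nonneg
    intro n hn
    have : (0:ℝ) < n := lt_trans hM (hZ2 n hn)
    positivity
  have hT3 : (0:ℝ) ≤ ∑ n ∈ Z3, 1 / (2 * C1 * ((n:ℝ) - M)) := by
    apply Finset.sum_nonneg
    intro n hn
    have : (0:ℝ) < (n:ℝ) - M := sub_pos.mpr (hZ3 n hn)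
    positivity
  have e1 : ∑ n ∈ Z1, 2 / (3 * C1 * (n:ℝ)) = 2 * ∑ n ∈ Z1, 1 / (3 * C1 * n) := by
    rw [Finset.mul_sum]; exact Finset.sum_congr rfl fun n _ => by ring
  have e2 : ∑ n ∈ Z1, 2 / (3 * C1 * ((n:ℝ) - M))
      = 2 * ∑ n ∈ Z1, 1 / (3 * C1 * ((n:ℝ) - M)) := by
    rw [Finset.mul_sum]; exact Finset.sum_congr rfl fun n _ => by ring
  rw [e1, e2]
  nlinarith [mul_pos hS1 hT1, mul_nonneg hS2 hT3, mul_nonneg hS2 hT1.le,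
    mul_nonneg hS1.le hT3]
end

section
/- In any Nash equilibrium of the Epoch II game, if d_{n,1} = d_{n,2} = 0 at a stage n ∈ N_II and furthermore some stage n† ∈ N_II with n† < n has d_{n†,1} > 0 or d_{n†,2} > 0, then interchanging the corresponding seller's offered amounts between stages n and n† strictly increases that seller's payoff, contradicting the Nash equilibrium property. Hence in every Nash equilibrium, the set Z_4 = {n ∈ N_II : d_{n,1} = d_{n,2} = 0} is downward-closed in N_II (it consists of the smallest indices of N_II). -/
lemma sum_split_two {N : Finset ℕ} {n n' : ℕ} (hn : n ∈ N) (hn' : n' ∈ N)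
    (hne : n' ≠ n) (f : ℕ → ℝ) :
    ∑ m ∈ N, f m = f n + f n' + ∑ m ∈ (N.erase n).erase n', f m := by
  rw [← Finset.add_sum_erase N f hn,
    ← Finset.add_sum_erase _ f (Finset.mem_erase.mpr ⟨hne, hn'⟩), add_assoc]

set_option maxHeartbeats 1000000 in
/-- In any Nash equilibrium of the Epoch II game, the set
`Z₄ = {n : d_{n,1} = d_{n,2} = 0}` is downward closed in `N_II`: if both
demands vanish at stage `n`, they vanish at every earlier stage of `N_II`. -/
theorem stmt_12 (N : Finset ℕ) (M : ℕ) (hN : ∀ n ∈ N, M < n)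
    (C0 C1 Q1 Q2 Q1II Q2II : ℝ) (hC1 : 0 < C1) (hC0 : C0 > 2 * C1 * (Q1 + Q2))
    (hQ1II : 0 ≤ Q1II) (hQ2II : 0 ≤ Q2II) (hQ1 : Q1II ≤ Q1) (hQ2 : Q2II ≤ Q2)
    (d1 d2 : ℕ → ℝ)
    (hd1 : ∀ n ∈ N, 0 ≤ d1 n) (hd2 : ∀ n ∈ N, 0 ≤ d2 n)
    (hs1 : ∑ n ∈ N, d1 n ≤ Q1II) (hs2 : ∑ n ∈ N, d2 n ≤ Q2II)
    (hNash1 : ∀ e : ℕ → ℝ, (∀ n ∈ N, 0 ≤ e n) → (∑ n ∈ N, e n ≤ Q1II) →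
      ∑ n ∈ N, (C0 - C1 * (e n + d2 n)) * e n * n ≤
        ∑ n ∈ N, (C0 - C1 * (d1 n + d2 n)) * d1 n * n)
    (hNash2 : ∀ e : ℕ → ℝ, (∀ n ∈ N, 0 ≤ e n) → (∑ n ∈ N, e n ≤ Q2II) →
      ∑ n ∈ N, (C0 - C1 * (d1 n + e n)) * e n * ((n : ℝ) - M) ≤
        ∑ n ∈ N, (C0 - C1 * (d1 n + d2 n)) * d2 n * ((n : ℝ) - M)) :
    ∀ n ∈ N, d1 n = 0 → d2 n = 0 →
      ∀ n' ∈ N, n' < n → d1 n' = 0 ∧ d2 n' = 0 := by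
  intro n hn h1n h2n n' hn' hlt
  have hne : n' ≠ n := Nat.ne_of_lt hlt
  have hltR : (n' : ℝ) < (n : ℝ) := by exact_mod_cast hlt
  have hMn' : (M : ℝ) < (n' : ℝ) := by exact_mod_cast hN n' hn'
  have hn'pos : (0 : ℝ) < (n' : ℝ) := lt_of_le_of_lt (Nat.cast_nonneg M) hMn'
  have hd1b : d1 n' ≤ Q1 := le_trans (le_trans
    (Finset.single_le_sum (fun m hm => hd1 m hm) hn') hs1) hQ1
  have hd2b : d2 n' ≤ Q2 := le_trans (le_trans
    (Finset.single_le_sum (fun m hm => hd2 m hm) hn') hs2) hQ2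
  have hQ1pos : 0 ≤ Q1 := le_trans hQ1II hQ1
  have hQ2pos : 0 ≤ Q2 := le_trans hQ2II hQ2
  have hd1n' : 0 ≤ d1 n' := hd1 n' hn'
  have hd2n' : 0 ≤ d2 n' := hd2 n' hn'
  constructor
  · -- d1 n' = 0
    by_contra h
    have hpos : 0 < d1 n' := lt_of_le_of_ne hd1n' (Ne.symm h)
    set e : ℕ → ℝ := fun m => if m = n then d1 n' else if m = n' then 0 else d1 m
      with he_def
    have he_n : e n = d1 n' := by simp [he_def]
    have he_n' : e n' = 0 := by simp [he_def, hne]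
    have he_other : ∀ m, m ≠ n → m ≠ n' → e m = d1 m := by
      intro m h1 h2; simp [he_def, h1, h2]
    have hmem : ∀ m ∈ (N.erase n).erase n', m ≠ n ∧ m ≠ n' := by
      intro m hm
      exact ⟨(Finset.mem_erase.mp (Finset.mem_of_mem_erase hm)).1,
        (Finset.mem_erase.mp hm).1⟩
    have henn : ∀ m ∈ N, 0 ≤ e m := by
      intro m hm
      rcases eq_or_ne m n with rfl | h1
      · rw [he_n]; exact hd1n'
      rcases eq_or_ne m n' with rfl | h2
      · rw [he_n']
      · rw [he_other m h1 h2]; exact hd1 m hm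
    have hesum : ∑ m ∈ N, e m ≤ Q1II := by
      have h1 := sum_split_two hn hn' hne e
      have h2 := sum_split_two hn hn' hne d1
      have h3 : ∑ m ∈ (N.erase n).erase n', e m
          = ∑ m ∈ (N.erase n).erase n', d1 m := by
        refine Finset.sum_congr rfl fun m hm => ?_
        exact he_other m (hmem m hm).1 (hmem m hm).2
      have : ∑ m ∈ N, e m = ∑ m ∈ N, d1 m := by
        rw [h1, h2, h3, he_n, he_n', h1n]; ring
      linarith
    have hkey := hNash1 e henn hesum
    rw [sum_split_two hn hn' hne (fun m => (C0 - C1 * (e m + d2 m)) * e m * m),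
      sum_split_two hn hn' hne (fun m => (C0 - C1 * (d1 m + d2 m)) * d1 m * m)]
      at hkey
    have h3 : ∑ m ∈ (N.erase n).erase n', (C0 - C1 * (e m + d2 m)) * e m * m
        = ∑ m ∈ (N.erase n).erase n', (C0 - C1 * (d1 m + d2 m)) * d1 m * m := by
      refine Finset.sum_congr rfl fun m hm => ?_
      rw [he_other m (hmem m hm).1 (hmem m hm).2]
    rw [h3] at hkey
    simp only [he_n, he_n', h1n, h2n] at hkey
    -- hkey : (C0 - C1*(d1 n' + 0))*d1 n'*n + 0 ≤ 0 + (C0 - C1*(d1 n'+d2 n'))*d1 n'*n'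
    simp only [mul_zero, zero_mul, add_zero, zero_add] at hkey
    have hA : 0 < C0 - C1 * (d1 n' + d2 n') := by nlinarith
    have hnR : (0:ℝ) ≤ (n:ℝ) := Nat.cast_nonneg n
    nlinarith [mul_pos hA hpos, mul_nonneg (mul_nonneg hC1.le hd2n') hpos.le,
      hnR, hltR, hn'pos]
  · -- d2 n' = 0
    by_contra h
    have hpos : 0 < d2 n' := lt_of_le_of_ne hd2n' (Ne.symm h)
    set e : ℕ → ℝ := fun m => if m = n then d2 n' else if m = n' then 0 else d2 m
      with he_def
    have he_n : e n = d2 n' := by simp [he_def]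
    have he_n' : e n' = 0 := by simp [he_def, hne]
    have he_other : ∀ m, m ≠ n → m ≠ n' → e m = d2 m := by
      intro m h1 h2; simp [he_def, h1, h2]
    have hmem : ∀ m ∈ (N.erase n).erase n', m ≠ n ∧ m ≠ n' := by
      intro m hm
      exact ⟨(Finset.mem_erase.mp (Finset.mem_of_mem_erase hm)).1,
        (Finset.mem_erase.mp hm).1⟩
    have henn : ∀ m ∈ N, 0 ≤ e m := by
      intro m hm
      rcases eq_or_ne m n with rfl | h1
      · rw [he_n]; exact hd2n'
      rcases eq_or_ne m n' with rfl | h2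
      · rw [he_n']
      · rw [he_other m h1 h2]; exact hd2 m hm
    have hesum : ∑ m ∈ N, e m ≤ Q2II := by
      have h1 := sum_split_two hn hn' hne e
      have h2 := sum_split_two hn hn' hne d2
      have h3 : ∑ m ∈ (N.erase n).erase n', e m
          = ∑ m ∈ (N.erase n).erase n', d2 m := by
        refine Finset.sum_congr rfl fun m hm => ?_
        exact he_other m (hmem m hm).1 (hmem m hm).2
      have : ∑ m ∈ N, e m = ∑ m ∈ N, d2 m := by
        rw [h1, h2, h3, he_n, he_n', h2n]; ring
      linarith
    have hkey := hNash2 e henn hesum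
    rw [sum_split_two hn hn' hne
        (fun m => (C0 - C1 * (d1 m + e m)) * e m * ((m : ℝ) - M)),
      sum_split_two hn hn' hne
        (fun m => (C0 - C1 * (d1 m + d2 m)) * d2 m * ((m : ℝ) - M))] at hkey
    have h3 : ∑ m ∈ (N.erase n).erase n',
          (C0 - C1 * (d1 m + e m)) * e m * ((m : ℝ) - M)
        = ∑ m ∈ (N.erase n).erase n',
          (C0 - C1 * (d1 m + d2 m)) * d2 m * ((m : ℝ) - M) := by
      refine Finset.sum_congr rfl fun m hm => ?_
      rw [he_other m (hmem m hm).1 (hmem m hm).2]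
    rw [h3] at hkey
    simp only [he_n, he_n', h1n, h2n] at hkey
    simp only [mul_zero, zero_mul, add_zero, zero_add] at hkey
    have hA : 0 < C0 - C1 * (d1 n' + d2 n') := by nlinarith
    have hwn' : (0:ℝ) < (n':ℝ) - M := by linarith
    have hwn : (0:ℝ) ≤ (n:ℝ) - M := by linarith
    have k1 : (C0 - C1 * (d1 n' + d2 n')) * d2 n' * ((n':ℝ) - M)
        < (C0 - C1 * (d1 n' + d2 n')) * d2 n' * ((n:ℝ) - M) :=
      mul_lt_mul_of_pos_left (by linarith) (mul_pos hA hpos)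
    have k2 : (C0 - C1 * (d1 n' + d2 n')) * d2 n' * ((n:ℝ) - M)
        ≤ (C0 - C1 * d2 n') * d2 n' * ((n:ℝ) - M) := by
      have hle : C0 - C1 * (d1 n' + d2 n') ≤ C0 - C1 * d2 n' := by
        nlinarith [mul_nonneg hC1.le hd1n']
      exact mul_le_mul_of_nonneg_right
        (mul_le_mul_of_nonneg_right hle hpos.le) hwn
    linarith
end
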